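/- Let V, Y, Z be finite nonempty sets, let Q be a pmf on V×Y with marginals Q_V, Q_Y, let P_Y be a pmf on Y with P_Y(y) > 0 for all y, let θ > 0 satisfy |Q_Y(y) − P_Y(y)| ≤ θ·P_Y(y) for all y, and let W(z|y) be a channel from Y to Z (a pmf on Z for each y ∈ Y). Let Ṽ := V ∪ {v*} with v* a new symbol and define the pmf P' on Ṽ×Y by P'(v,y) := Q(v,y)/(1+θ) for v ∈ V and P'(v*,y) := ((1+θ)·P_Y(y) − Q_Y(y))/(1+θ). Extend Q to V×Y×Z by Q(v,y,z) := Q(v,y)·W(z|y) and P' to Ṽ×Y×Z by P'(v,y,z) := P'(v,y)·W(z|y). Then I_Q(V;Z) ≤ (1+θ)·I_{P'}(Ṽ;Z), and consequently I_Q(V;Z) ≤ I_{P'}(Ṽ;Z) + θ·log|Z|. -/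

import Mathlib

open scoped BigOperators Classical

noncomputable section

/-- Kullback–Leibler divergence between two pmfs on a finite set (natural log,
with the convention `0·log(0/q) = 0` encoded by the term vanishing). -/
def KL {Ω : Type} [Fintype Ω] (P Q : Ω → ℝ) : ℝ :=
  ∑ ω, P ω * Real.log (P ω / Q ω)

/-- `P` is a probability mass function on the finite set `Ω`. -/
def IsPMF {Ω : Type} [Fintype Ω] (P : Ω → ℝ) : Prop :=
  (∀ ω, 0 ≤ P ω) ∧ ∑ ω, P ω = 1

/-- Pushforward (law of `φ`) of the pmf `P` under the map `φ`. -/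
def pushf {Ω A : Type} [Fintype Ω] (P : Ω → ℝ) (φ : Ω → A) : A → ℝ :=
  fun a => ∑ ω, if φ ω = a then P ω else 0

/-- Mutual information `I(φA; φB)` under the pmf `P`. -/
def MIof {Ω A B : Type} [Fintype Ω] [Fintype A] [Fintype B]
    (P : Ω → ℝ) (φA : Ω → A) (φB : Ω → B) : ℝ :=
  KL (pushf P fun ω => (φA ω, φB ω)) (fun p => pushf P φA p.1 * pushf P φB p.2)

/-- Shannon entropy of a pmf on a finite set (natural log). -/
def entropy {Ω : Type} [Fintype Ω] (P : Ω → ℝ) : ℝ :=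
  -∑ ω, P ω * Real.log (P ω)

end

/-!
Let `P_Z` be the output law of `P'`; its input law is `P_Y`. Measuring the dependence of `Z` on `V`
under `Q` against `Q_V ⊗ P_Z` instead of `Q_V ⊗ Q_Z` can only increase it, by `D(Q_Z ‖ P_Z) ≥ 0`;
here `Q_Z ≪ P_Z` because `Q_Y ≤ (1+θ) P_Y`. Since `P'` restricted to `V` is `Q / (1+θ)`, the
increased quantity is `(1+θ)` times the contribution of the rows `v ∈ V` to `I_{P'}(Ṽ;Z)`, and the
row of the new symbol contributes a nonnegative amount. The second bound then follows from
`I_{P'}(Ṽ;Z) ≤ log |Z|`.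
-/

open Finset Real

section Divergence

variable {Ω : Type} [Fintype Ω]

lemma sub_le_mul_log_div {p q : ℝ} (hp : 0 ≤ p) (hq : 0 ≤ q) (hpq : q = 0 → p = 0) :
    p - q ≤ p * log (p / q) := by
  rcases hp.eq_or_lt with rfl | hp
  · simpa using hq
  have hq : 0 < q := hq.lt_of_ne fun h => hp.ne' (hpq h.symm)
  have hlog := one_sub_inv_le_log_of_pos (div_pos hp hq)
  rw [inv_div] at hlog
  calc p - q = p * (1 - q / p) := by field_simp
    _ ≤ p * log (p / q) := by gcongr

lemma sum_sub_sum_le_KL {P Q : Ω → ℝ} (hP : ∀ ω, 0 ≤ P ω) (hQ : ∀ ω, 0 ≤ Q ω)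
    (hPQ : ∀ ω, Q ω = 0 → P ω = 0) : ∑ ω, P ω - ∑ ω, Q ω ≤ KL P Q := by
  rw [← sum_sub_distrib]
  exact sum_le_sum fun ω _ => sub_le_mul_log_div (hP ω) (hQ ω) (hPQ ω)

lemma KL_const_mul {c : ℝ} (hc : c ≠ 0) (P Q : Ω → ℝ) :
    KL (fun ω => c * P ω) (fun ω => c * Q ω) = c * KL P Q := by
  simp only [KL, mul_sum, mul_div_mul_left _ _ hc, mul_assoc]

end Divergence

section Pushforward

variable {Ω A B : Type} [Fintype Ω]

lemma IsPMF.pushf [Fintype A] {P : Ω → ℝ} (hP : IsPMF P) (φ : Ω → A) : IsPMF (pushf P φ) := by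
  refine ⟨fun a => sum_nonneg fun ω _ => ?_, ?_⟩
  · split_ifs
    exacts [hP.1 ω, le_rfl]
  · simp only [_root_.pushf]
    rw [sum_comm]
    simpa using hP.2

lemma le_pushf_apply {P : Ω → ℝ} (hP : ∀ ω, 0 ≤ P ω) (φ : Ω → A) (ω : Ω) :
    P ω ≤ pushf P φ (φ ω) := by
  calc P ω = if φ ω = φ ω then P ω else 0 := by simp
    _ ≤ pushf P φ (φ ω) := single_le_sum (f := fun ω' => if φ ω' = φ ω then P ω' else 0)
        (fun ω' _ => by split_ifs; exacts [hP ω', le_rfl]) (mem_univ ω)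

lemma pushf_pushf [Fintype A] (P : Ω → ℝ) (φ : Ω → A) (ψ : A → B) :
    pushf (pushf P φ) ψ = pushf P (ψ ∘ φ) := by
  ext b
  have hite (a : A) : (if ψ a = b then ∑ ω, if φ ω = a then P ω else 0 else 0)
      = ∑ ω, if φ ω = a then (if ψ a = b then P ω else 0) else 0 := by
    split_ifs <;> simp
  simp only [pushf, Function.comp_apply, hite]
  rw [sum_comm]
  simp

lemma pushf_fst_apply [Fintype A] [Fintype B] (R : A × B → ℝ) (a : A) :
    pushf R Prod.fst a = ∑ b, R (a, b) := by
  rw [pushf, Fintype.sum_prod_type, Fintype.sum_eq_single a fun x hx => by simp [hx]]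
  simp

lemma pushf_snd_apply [Fintype A] [Fintype B] (R : A × B → ℝ) (b : B) :
    pushf R Prod.snd b = ∑ a, R (a, b) := by
  simp [pushf, Fintype.sum_prod_type]

lemma MIof_fst_snd [Fintype A] [Fintype B] (R : A × B → ℝ) :
    MIof R Prod.fst Prod.snd = KL R (fun p => pushf R Prod.fst p.1 * pushf R Prod.snd p.2) := by
  have hid : pushf R (fun p : A × B => (p.1, p.2)) = R := by
    ext p
    simp [pushf]
  rw [MIof, hid]

lemma MIof_eq_MIof_pushf [Fintype A] [Fintype B] (P : Ω → ℝ) (φA : Ω → A) (φB : Ω → B) :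
    MIof P φA φB = MIof (pushf P fun ω => (φA ω, φB ω)) Prod.fst Prod.snd := by
  rw [MIof_fst_snd, pushf_pushf, pushf_pushf]
  rfl

end Pushforward

section Channel

variable {A Y Z : Type} [Fintype A] [Fintype Y] [Fintype Z]

lemma IsPMF.mul_channel {P : A × Y → ℝ} (hP : IsPMF P) {W : Y → Z → ℝ}
    (hW : ∀ y, IsPMF (W y)) : IsPMF fun ω : A × Y × Z => P (ω.1, ω.2.1) * W ω.2.1 ω.2.2 := by
  refine ⟨fun ω => mul_nonneg (hP.1 _) ((hW _).1 _), ?_⟩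
  simp only [Fintype.sum_prod_type, ← mul_sum, (hW _).2, mul_one]
  simpa [Fintype.sum_prod_type] using hP.2

lemma pushf_fst_thd_apply (P : A × Y × Z → ℝ) (a : A) (z : Z) :
    pushf P (fun ω => (ω.1, ω.2.2)) (a, z) = ∑ y, P (a, y, z) := by
  simp [pushf, Fintype.sum_prod_type, Prod.ext_iff, ite_and]

end Channel

section MutualInformation

variable {A Z : Type} [Fintype A] [Fintype Z]

lemma KL_prod_eq_MIof_add_KL {R : A × Z → ℝ} (hR : ∀ p, 0 ≤ R p) {r : Z → ℝ}
    (hac : ∀ z, r z = 0 → pushf R Prod.snd z = 0) :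
    KL R (fun p => pushf R Prod.fst p.1 * r p.2)
      = MIof R Prod.fst Prod.snd + KL (pushf R Prod.snd) r := by
  have hterm (p : A × Z) : R p * log (R p / (pushf R Prod.fst p.1 * r p.2))
      = R p * log (R p / (pushf R Prod.fst p.1 * pushf R Prod.snd p.2))
        + R p * log (pushf R Prod.snd p.2 / r p.2) := by
    rcases (hR p).eq_or_lt with h | h
    · simp [← h]
    have hA : 0 < pushf R Prod.fst p.1 := h.trans_le (le_pushf_apply hR _ p)
    have hZ : 0 < pushf R Prod.snd p.2 := h.trans_le (le_pushf_apply hR _ p)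
    have hr : r p.2 ≠ 0 := fun h0 => hZ.ne' (hac _ h0)
    rw [← mul_add, ← log_mul (by positivity) (by positivity)]
    congr 2
    field_simp
  have hcross : ∑ p : A × Z, R p * log (pushf R Prod.snd p.2 / r p.2)
      = KL (pushf R Prod.snd) r := by
    rw [Fintype.sum_prod_type, sum_comm, KL]
    simp only [← sum_mul, ← pushf_snd_apply]
  rw [MIof_fst_snd, KL, KL, ← hcross, ← sum_add_distrib]
  exact sum_congr rfl fun p _ => hterm p

lemma MIof_le_KL_prod {R : A × Z → ℝ} (hR : IsPMF R) {r : Z → ℝ} (hr : IsPMF r)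
    (hac : ∀ z, r z = 0 → pushf R Prod.snd z = 0) :
    MIof R Prod.fst Prod.snd ≤ KL R (fun p => pushf R Prod.fst p.1 * r p.2) := by
  have hgibbs := sum_sub_sum_le_KL (hR.pushf _).1 hr.1 hac
  rw [(hR.pushf _).2, hr.2, sub_self] at hgibbs
  rw [KL_prod_eq_MIof_add_KL hR.1 hac]
  linarith

lemma KL_row_nonneg {R : A × Z → ℝ} (hR : IsPMF R) (a : A) :
    0 ≤ KL (fun z => R (a, z)) (fun z => pushf R Prod.fst a * pushf R Prod.snd z) := by
  have hac (z : Z) (h : pushf R Prod.fst a * pushf R Prod.snd z = 0) : R (a, z) = 0 := by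
    refine le_antisymm ?_ (hR.1 _)
    rcases mul_eq_zero.1 h with h | h
    · exact h ▸ le_pushf_apply hR.1 Prod.fst (a, z)
    · exact h ▸ le_pushf_apply hR.1 Prod.snd (a, z)
  have hgibbs := sum_sub_sum_le_KL (fun z => hR.1 (a, z))
    (fun z => mul_nonneg ((hR.pushf _).1 a) ((hR.pushf _).1 z)) hac
  rwa [← mul_sum, (hR.pushf _).2, mul_one, ← pushf_fst_apply, sub_self] at hgibbs

lemma KL_some_le_MIof {R : Option A × Z → ℝ} (hR : IsPMF R) :
    KL (fun p : A × Z => R (some p.1, p.2))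
        (fun p => pushf R Prod.fst (some p.1) * pushf R Prod.snd p.2)
      ≤ MIof R Prod.fst Prod.snd := by
  rw [MIof_fst_snd, KL, KL, Fintype.sum_prod_type, Fintype.sum_prod_type, Fintype.sum_option]
  exact le_add_of_nonneg_left (KL_row_nonneg hR none)

theorem MIof_le_mul_MIof_of_some {c : ℝ} (hc : 0 < c) {R : A × Z → ℝ} {R' : Option A × Z → ℝ}
    (hR : IsPMF R) (hR' : IsPMF R') (hsome : ∀ a z, R' (some a, z) = R (a, z) / c) :
    MIof R Prod.fst Prod.snd ≤ c * MIof R' Prod.fst Prod.snd := by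
  have hac (z : Z) (hz : pushf R' Prod.snd z = 0) : pushf R Prod.snd z = 0 := by
    have hle : pushf R Prod.snd z ≤ c * pushf R' Prod.snd z := by
      rw [pushf_snd_apply, pushf_snd_apply, Fintype.sum_option, mul_add, mul_sum]
      simp only [hsome, mul_div_cancel₀ _ hc.ne']
      exact le_add_of_nonneg_left (mul_nonneg hc.le (hR'.1 _))
    exact le_antisymm (by simpa [hz] using hle) ((hR.pushf _).1 z)
  have hfst (a : A) : pushf R' Prod.fst (some a) = c⁻¹ * pushf R Prod.fst a := by
    simp only [pushf_fst_apply, hsome, mul_sum, div_eq_inv_mul]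
  calc MIof R Prod.fst Prod.snd
        ≤ KL R (fun p => pushf R Prod.fst p.1 * pushf R' Prod.snd p.2) :=
        MIof_le_KL_prod hR (hR'.pushf _) hac
    _ = c * KL (fun p : A × Z => R' (some p.1, p.2))
          (fun p => pushf R' Prod.fst (some p.1) * pushf R' Prod.snd p.2) := by
        simp only [hsome, hfst, div_eq_inv_mul, mul_assoc]
        rw [KL_const_mul (inv_ne_zero hc.ne'), ← mul_assoc, mul_inv_cancel₀ hc.ne', one_mul]
    _ ≤ c * MIof R' Prod.fst Prod.snd := mul_le_mul_of_nonneg_left (KL_some_le_MIof hR') hc.le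

lemma MIof_le_log_card [Nonempty Z] {R : A × Z → ℝ} (hR : IsPMF R) :
    MIof R Prod.fst Prod.snd ≤ log (Fintype.card Z) := by
  set n : ℝ := (Fintype.card Z : ℝ)
  have hn : 0 < n := Nat.cast_pos.2 Fintype.card_pos
  have hunif : IsPMF fun _ : Z => n⁻¹ :=
    ⟨fun _ => by positivity, by simp [n]⟩
  have hterm (p : A × Z) : R p * log (R p / (pushf R Prod.fst p.1 * n⁻¹)) ≤ R p * log n := by
    rcases (hR.1 p).eq_or_lt with h | h
    · simp [← h]
    have hA : R p ≤ pushf R Prod.fst p.1 := le_pushf_apply hR.1 _ p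
    have hAn : 0 < pushf R Prod.fst p.1 * n⁻¹ := by have := h.trans_le hA; positivity
    refine mul_le_mul_of_nonneg_left (log_le_log (div_pos h hAn) ?_) h.le
    rw [div_le_iff₀ hAn]
    field_simp
    exact hA
  calc MIof R Prod.fst Prod.snd ≤ KL R (fun p => pushf R Prod.fst p.1 * n⁻¹) :=
        MIof_le_KL_prod hR hunif fun _ h => absurd h (by positivity)
    _ ≤ ∑ p, R p * log n := sum_le_sum fun p _ => hterm p
    _ = log n := by rw [← sum_mul, hR.2, one_mul]

end MutualInformation

lemma isPMF_extra_symbol {V Y : Type} [Fintype V] [Fintype Y] {Q : V × Y → ℝ} (hQ : IsPMF Q)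
    {PY : Y → ℝ} (hPY : ∑ y, PY y = 1) {c : ℝ} (hc : 0 < c)
    (hdom : ∀ y, pushf Q Prod.snd y ≤ c * PY y) {P' : Option V × Y → ℝ}
    (hsome : ∀ v y, P' (some v, y) = Q (v, y) / c)
    (hnone : ∀ y, P' (none, y) = (c * PY y - pushf Q Prod.snd y) / c) : IsPMF P' := by
  refine ⟨?_, ?_⟩
  · rintro ⟨_ | v, y⟩
    · rw [hnone]
      exact div_nonneg (sub_nonneg.2 (hdom y)) hc.le
    · rw [hsome]
      exact div_nonneg (hQ.1 _) hc.le
  · have hQ1 : ∑ v, ∑ y, Q (v, y) = 1 := by rw [← Fintype.sum_prod_type, hQ.2]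
    rw [Fintype.sum_prod_type, Fintype.sum_option]
    simp only [hnone, hsome, ← sum_div, sum_sub_distrib, ← mul_sum, hPY, (hQ.pushf _).2, hQ1]
    field_simp
    ring

theorem extra_symbol_channel_bound_general
    (V Y Z : Type) [Fintype V] [Fintype Y] [Fintype Z]
    [Nonempty Z]
    (Q : V × Y → ℝ) (hQ : IsPMF Q)
    (PY : Y → ℝ) (hPY : IsPMF PY)
    (θ : ℝ) (hθ : 0 < θ)
    (hclose : ∀ y, |pushf Q Prod.snd y - PY y| ≤ θ * PY y)
    (W : Y → Z → ℝ) (hW : ∀ y, IsPMF (W y))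
    (P' : Option V × Y → ℝ)
    (hP'some : ∀ (v : V) (y : Y), P' (some v, y) = Q (v, y) / (1 + θ))
    (hP'none : ∀ y : Y,
      P' (none, y) = ((1 + θ) * PY y - pushf Q Prod.snd y) / (1 + θ)) :
    MIof (fun ω : V × Y × Z => Q (ω.1, ω.2.1) * W ω.2.1 ω.2.2)
        (fun ω => ω.1) (fun ω => ω.2.2)
      ≤ (1 + θ) * MIof (fun ω : Option V × Y × Z => P' (ω.1, ω.2.1) * W ω.2.1 ω.2.2)
          (fun ω => ω.1) (fun ω => ω.2.2) ∧
    MIof (fun ω : V × Y × Z => Q (ω.1, ω.2.1) * W ω.2.1 ω.2.2)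
        (fun ω => ω.1) (fun ω => ω.2.2)
      ≤ MIof (fun ω : Option V × Y × Z => P' (ω.1, ω.2.1) * W ω.2.1 ω.2.2)
          (fun ω => ω.1) (fun ω => ω.2.2)
        + θ * Real.log (Fintype.card Z : ℝ) := by
  have hc : 0 < 1 + θ := by linarith
  have hP' : IsPMF P' := isPMF_extra_symbol hQ hPY.2 hc
    (fun y => by linarith [(abs_le.1 (hclose y)).2]) hP'some hP'none
  rw [MIof_eq_MIof_pushf, MIof_eq_MIof_pushf (Ω := Option V × Y × Z)]
  have hRQ := (hQ.mul_channel hW).pushf fun ω => (ω.1, ω.2.2)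
  have hRP' := (hP'.mul_channel hW).pushf fun ω => (ω.1, ω.2.2)
  have hI := MIof_le_mul_MIof_of_some hc hRQ hRP' fun v z => by
    simp only [pushf_fst_thd_apply, hP'some, sum_div, div_mul_eq_mul_div]
  have hlog := mul_le_mul_of_nonneg_left (MIof_le_log_card hRP') hθ.le
  exact ⟨hI, by linarith⟩

/-- **Adding an extra symbol: effect on `I(V;Z)` through a channel (Lemma 6,
part 2).** With `P'` built from `Q` and `P_Y` as before and both `Q`, `P'`
extended to `Z` through the channel `W`, one has
`I_Q(V;Z) ≤ (1+θ)·I_{P'}(Ṽ;Z)` and hence `I_Q(V;Z) ≤ I_{P'}(Ṽ;Z) + θ·log|Z|`. -/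
theorem extra_symbol_channel_bound
    (V Y Z : Type) [Fintype V] [Fintype Y] [Fintype Z]
    [Nonempty V] [Nonempty Y] [Nonempty Z]
    (Q : V × Y → ℝ) (hQ : IsPMF Q)
    (PY : Y → ℝ) (hPY : IsPMF PY) (hPYpos : ∀ y, 0 < PY y)
    (θ : ℝ) (hθ : 0 < θ)
    (hclose : ∀ y, |pushf Q Prod.snd y - PY y| ≤ θ * PY y)
    (W : Y → Z → ℝ) (hW : ∀ y, IsPMF (W y))
    (P' : Option V × Y → ℝ)
    (hP'some : ∀ (v : V) (y : Y), P' (some v, y) = Q (v, y) / (1 + θ))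
    (hP'none : ∀ y : Y,
      P' (none, y) = ((1 + θ) * PY y - pushf Q Prod.snd y) / (1 + θ)) :
    MIof (fun ω : V × Y × Z => Q (ω.1, ω.2.1) * W ω.2.1 ω.2.2)
        (fun ω => ω.1) (fun ω => ω.2.2)
      ≤ (1 + θ) * MIof (fun ω : Option V × Y × Z => P' (ω.1, ω.2.1) * W ω.2.1 ω.2.2)
          (fun ω => ω.1) (fun ω => ω.2.2) ∧
    MIof (fun ω : V × Y × Z => Q (ω.1, ω.2.1) * W ω.2.1 ω.2.2)
        (fun ω => ω.1) (fun ω => ω.2.2)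
      ≤ MIof (fun ω : Option V × Y × Z => P' (ω.1, ω.2.1) * W ω.2.1 ω.2.2)
          (fun ω => ω.1) (fun ω => ω.2.2)
        + θ * Real.log (Fintype.card Z : ℝ) :=
  extra_symbol_channel_bound_general V Y Z Q hQ PY hPY θ hθ hclose W hW P' hP'some hP'none
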